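/- arXiv:1806.05084 — 7 statements merged into one kernel-verified Lean document; each statement's English description precedes it below -/
import Mathlib

section
/- For every n > 0 and every s in {0,...,n+1}, the number of open j-dimensional faces of the tile T_s^n equals 0 if 0 \le j < s-1, and equals \binom{n+1-s}{n-j} if s-1 \le j \le n. -/
open Finset

theorem card_filter_card_eq_and_subset {α : Type*} [Fintype α] [DecidableEq α]
    (s : Finset α) (k : ℕ) :
    #{t : Finset α | #t = k ∧ s ⊆ t} =
      if k < #s then 0 else (Fintype.card α - #s).choose (k - #s) := by
  split_ifs with hk
  · rw [card_eq_zero, filter_eq_empty_iff]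
    rintro t - ⟨rfl, hst⟩
    exact hk.not_ge (card_le_card hst)
  · rw [← card_univ, ← card_filter_powersetCard_subset s univ k (subset_univ s) (not_lt.1 hk),
      powersetCard_eq_filter, powerset_univ, filter_filter]

/-- Removing the facet opposite to vertex `i` deletes exactly the open faces missing `i`, so the
open faces of `T_s^n` are the nonempty `τ ⊆ Fin (n + 1)` containing every vertex `i < s`. -/
theorem tile_face_numbers_general (n s : ℕ) (hs : s ≤ n + 1) (j : ℕ) (hj : j ≤ n) :
    ((Finset.univ : Finset (Finset (Fin (n + 1)))).filter
        (fun τ => τ.card = j + 1 ∧ ∀ i : Fin (n + 1), (i : ℕ) < s → i ∈ τ)).card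
      = if j + 1 < s then 0 else (n + 1 - s).choose (n - j) := by
  set S : Finset (Fin (n + 1)) := {i | (i : ℕ) < s}
  have hS : #S = s := by rw [Fin.card_filter_val_lt, min_eq_right hs]
  have hfaces : ∀ τ : Finset (Fin (n + 1)), (∀ i : Fin (n + 1), (i : ℕ) < s → i ∈ τ) ↔ S ⊆ τ :=
    fun τ => by simp [S, subset_iff]
  simp_rw [hfaces]
  rw [card_filter_card_eq_and_subset, hS, Fintype.card_fin]
  split_ifs
  · rfl
  · exact Nat.choose_symm_of_eq_add (by omega)

/-- The tile `T_s^n` is the standard `n`-simplex (with vertex set `Fin (n+1)`) with `s` facets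
removed; removing the facet opposite to vertex `i` (for `i < s`) leaves exactly the open faces
`τ` containing all the vertices `i < s`.  The number of open `j`-dimensional faces of `T_s^n`
is `0` if `j < s - 1` and `C(n+1-s, n-j)` if `s - 1 ≤ j ≤ n`. -/
theorem tile_face_numbers (n s : ℕ) (hn : 0 < n) (hs : s ≤ n + 1) (j : ℕ) (hj : j ≤ n) :
    ((Finset.univ : Finset (Finset (Fin (n + 1)))).filter
        (fun τ => τ.card = j + 1 ∧ ∀ i : Fin (n + 1), (i : ℕ) < s → i ∈ τ)).card
      = if j + 1 < s then 0 else (n + 1 - s).choose (n - j) :=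
  tile_face_numbers_general n s hs j hj
end

section
/- For every n > 0, the boundary of the standard (n+1)-simplex is the disjoint union of the tiles T_0^n, T_1^n, ..., T_{n+1}^n; in particular, counting open j-faces gives \binom{n+2}{j+1} = \sum_{s=0}^{n+1} f_j(T_s^n) for 0 \le j \le n, where f_j(T_s^n) = \binom{n+1-s}{n-j} if j \ge s-1 and 0 otherwise. -/
/-! A proper face lies in the tile indexed by its least missing vertex, and no other tile
can contain it. Counting the `j`-faces tile by tile turns the identity into the hockey-stick
identity `∑_{s ≤ j+1} C(n+1-s, n-j) = C(n+2, n-j+1)`. -/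

/-- `tileFace n s j` = number of open `j`-dimensional faces of the tile `T_s^n`
(the standard `n`-simplex minus `s` facets). -/
def tileFace (n s j : ℕ) : ℕ :=
  if s ≤ j + 1 ∧ j ≤ n then (n + 1 - s).choose (n - j) else 0

open Finset

theorem Finset.existsUnique_forall_lt_mem_and_notMem {α : Type*} [LinearOrder α] [Fintype α]
    {τ : Finset α} (hτ : τ ≠ univ) : ∃! s, (∀ i < s, i ∈ τ) ∧ s ∉ τ := by
  have hc : τᶜ.Nonempty := by
    rwa [nonempty_iff_ne_empty, ne_eq, compl_eq_empty_iff]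
  refine ⟨τᶜ.min' hc, ⟨fun i hi => ?_, mem_compl.1 (min'_mem _ hc)⟩, fun t ⟨ht, htτ⟩ => ?_⟩
  · by_contra h
    exact (min'_le _ _ (mem_compl.2 h)).not_gt hi
  · exact le_antisymm (not_lt.1 fun hlt => mem_compl.1 (min'_mem _ hc) (ht _ hlt))
      (min'_le _ _ (mem_compl.2 htτ))

/-- The hockey-stick identity, summed from the top. -/
theorem Nat.sum_range_choose_sub (m k : ℕ) :
    ∑ s ∈ range (m + 1), (m + k - s).choose k = (m + k + 1).choose (k + 1) := by
  rw [← Nat.sum_range_add_choose, ← sum_range_reflect]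
  refine sum_congr rfl fun i hi => ?_
  have := mem_range.1 hi
  congr 1
  omega

theorem sum_tileFace {n j : ℕ} (hj : j ≤ n) :
    ∑ s ∈ range (n + 2), tileFace n s j = ∑ s ∈ range (j + 2), (n + 1 - s).choose (n - j) := by
  have hsub : range (j + 2) ⊆ range (n + 2) := range_subset_range.2 (by omega)
  rw [← sum_subset hsub (f := fun s => tileFace n s j) fun s _ hs =>
    if_neg (by simp only [mem_range] at hs; omega)]
  exact sum_congr rfl fun s hs => if_pos ⟨by simp only [mem_range] at hs; omega, hj⟩

theorem boundary_simplex_tiled_general (n : ℕ) :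
    (∀ τ : Finset (Fin (n + 2)), τ.Nonempty → τ ≠ Finset.univ →
        ∃! s : Fin (n + 2), (∀ i : Fin (n + 2), i < s → i ∈ τ) ∧ s ∉ τ) ∧
      ∀ j ≤ n, (n + 2).choose (j + 1) = ∑ s ∈ Finset.range (n + 2), tileFace n s j := by
  refine ⟨fun τ _ hτ => existsUnique_forall_lt_mem_and_notMem hτ, fun j hj => ?_⟩
  have hsum := Nat.sum_range_choose_sub (j + 1) (n - j)
  rw [show j + 1 + (n - j) = n + 1 by omega] at hsum
  rw [sum_tileFace hj, hsum,
    Nat.choose_symm_of_eq_add (show n + 2 = n - j + 1 + (j + 1) by omega)]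

/-- The boundary of the standard `(n+1)`-simplex (whose proper nonempty faces are the
nonempty proper subsets `τ` of `Fin (n+2)`) is the disjoint union of the tiles
`T_0^n, …, T_{n+1}^n`: every such face belongs to exactly one tile, the tile `T_s^n`
consisting of the faces containing all vertices `< s` and not the vertex `s`.
In particular, counting open `j`-faces gives `C(n+2, j+1) = ∑_{s=0}^{n+1} f_j(T_s^n)`. -/
theorem boundary_simplex_tiled (n : ℕ) (hn : 0 < n) :
    (∀ τ : Finset (Fin (n + 2)), τ.Nonempty → τ ≠ Finset.univ →
        ∃! s : Fin (n + 2), (∀ i : Fin (n + 2), i < s → i ∈ τ) ∧ s ∉ τ) ∧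
      ∀ j ≤ n, (n + 2).choose (j + 1) = ∑ s ∈ Finset.range (n + 2), tileFace n s j :=
  boundary_simplex_tiled_general n
end

section
/- Let K be a finite n-dimensional simplicial complex with a tiling \mathcal{T} by tiles T_0^n,...,T_{n+1}^n, with h_s(\mathcal{T}) tiles of type T_s^n. Then \sum_{s=0}^{n+1} h_s(\mathcal{T}) X^{n+1-s} = \sum_{i=0}^{n+1} f_{i-1}(K)(X-1)^{n+1-i}, where f_{-1}(K) is set equal to h_0(\mathcal{T}) and f_j(K) is the number of j-faces of K. -/
/-- A finite abstract simplicial complex on a finite vertex set `V`. -/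
def IsComplex {V : Type*} [DecidableEq V] (K : Finset (Finset V)) : Prop :=
  (∀ σ ∈ K, σ.Nonempty) ∧ ∀ σ ∈ K, ∀ τ, τ ⊆ σ → τ.Nonempty → τ ∈ K

/-- `fnum K p` = number of `p`-dimensional faces of `K`. -/
def fnum {V : Type*} [DecidableEq V] (K : Finset (Finset V)) (p : ℕ) : ℕ :=
  (K.filter fun σ => σ.card = p + 1).card

/-! Substituting `f_j = ∑_s h_s f_j(T_s^n)` and exchanging the sums reduces the identity to a single
tile. Reading `j ↦ n - j` as codimension, `∑_j f_j(T_s^n) (X - 1)^(n-j)` is the binomial expansion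
of `((X - 1) + 1)^(n+1-s)`, except that for `s = 0` the term of the empty face is missing; that term
is supplied by the convention `f_{-1} = h_0`. -/

open Finset

theorem sum_range_choose_mul_pow_of_lt {R : Type*} [CommSemiring R] {m N : ℕ} (hm : m < N)
    (y : R) : ∑ k ∈ range N, (m.choose k : R) * y ^ k = (y + 1) ^ m := by
  rw [add_pow, sum_subset (range_subset_range.2 hm)
    (f := fun k => y ^ k * 1 ^ (m - k) * (m.choose k : R))]
  · simp only [one_pow, mul_one, mul_comm]
  · intro k _ hk
    rw [mem_range, not_lt] at hk
    simp [Nat.choose_eq_zero_of_lt hk]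

theorem tileFace_sub {n s k : ℕ} (hs : s ≤ n + 1) (hk : k ≤ n) :
    tileFace n s (n - k) = (n + 1 - s).choose k := by
  unfold tileFace
  split_ifs
  · rw [Nat.sub_sub_self hk]
  · rw [Nat.choose_eq_zero_of_lt (by omega)]

theorem sum_tileFace_mul_pow {R : Type*} [CommSemiring R] {n s : ℕ} (hs : s ≤ n + 1) (y : R) :
    ∑ j ∈ range (n + 1), (tileFace n s j : R) * y ^ (n - j) + (if s = 0 then y ^ (n + 1) else 0)
      = (y + 1) ^ (n + 1 - s) := by
  rw [← sum_range_choose_mul_pow_of_lt (N := n + 2) (by omega) y, sum_range_succ _ (n + 1),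
    ← sum_range_reflect (fun j => (tileFace n s j : R) * y ^ (n - j)) (n + 1)]
  congr 1
  · refine sum_congr rfl fun k hk => ?_
    rw [mem_range] at hk
    rw [Nat.add_sub_cancel, tileFace_sub hs (by omega), Nat.sub_sub_self (by omega)]
  · rcases Nat.eq_zero_or_pos s with rfl | hs0
    · simp
    · simp [hs0.ne', Nat.choose_eq_zero_of_lt (by omega : n + 1 - s < n + 1)]

theorem sum_mul_pow_of_eq_sum_tileFace {R : Type*} [CommSemiring R] {n : ℕ} {h g : ℕ → ℕ}
    (hg : ∀ j ≤ n, g j = ∑ s ∈ range (n + 2), h s * tileFace n s j) (y : R) :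
    ∑ j ∈ range (n + 1), (g j : R) * y ^ (n - j) + (h 0 : R) * y ^ (n + 1)
      = ∑ s ∈ range (n + 2), (h s : R) * (y + 1) ^ (n + 1 - s) := by
  calc _ = ∑ s ∈ range (n + 2), (h s : R) * (∑ j ∈ range (n + 1),
          (tileFace n s j : R) * y ^ (n - j) + if s = 0 then y ^ (n + 1) else 0) := by
        simp only [mul_add, sum_add_distrib, mul_ite, mul_zero, sum_ite_eq', mem_range,
          Nat.zero_lt_succ, if_true, mul_sum]
        rw [sum_comm]
        congr 1
        refine sum_congr rfl fun j hj => ?_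
        rw [hg j (Nat.lt_succ_iff.1 (mem_range.1 hj))]
        push_cast
        simp only [sum_mul, mul_assoc]
    _ = _ := sum_congr rfl fun s hs => by
        rw [sum_tileFace_mul_pow (Nat.lt_succ_iff.1 (mem_range.1 hs))]

theorem h_vector_polynomial_identity_general {V : Type*} [DecidableEq V]
    (n : ℕ) (K : Finset (Finset V))
    (h f : ℕ → ℕ)
    (hf0 : f 0 = h 0)
    (hface : ∀ i, 1 ≤ i → i ≤ n + 2 → f i = fnum K (i - 1))
    (htiling : ∀ j ≤ n, fnum K j = ∑ s ∈ Finset.range (n + 2), h s * tileFace n s j) :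
    ∀ x : ℝ,
      ∑ s ∈ Finset.range (n + 2), (h s : ℝ) * x ^ (n + 1 - s)
        = ∑ i ∈ Finset.range (n + 2), (f i : ℝ) * (x - 1) ^ (n + 1 - i) := by
  intro x
  have hshift : ∀ j ∈ range (n + 1),
      (f (j + 1) : ℝ) * (x - 1) ^ (n + 1 - (j + 1)) = (fnum K j : ℝ) * (x - 1) ^ (n - j) := by
    intro j hj
    rw [hface (j + 1) (by omega) (by have := mem_range.1 hj; omega), Nat.add_sub_cancel, Nat.add_sub_add_right]
  rw [sum_range_succ' (fun i => (f i : ℝ) * (x - 1) ^ (n + 1 - i)), sum_congr rfl hshift, hf0,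
    Nat.sub_zero, sum_mul_pow_of_eq_sum_tileFace htiling, sub_add_cancel]

/-- Let `K` be a finite `n`-dimensional simplicial complex with a tiling by tiles
`T_0^n,…,T_{n+1}^n`, using `h s` tiles of type `T_s^n`; since the tiles are disjoint and
their open faces partition the open faces of `K`, `f_j(K) = ∑_s h_s f_j(T_s^n)`.
Then, with the convention `f_{-1}(K) = h 0` (here `f i` denotes the number of faces with
`i` vertices, i.e. of dimension `i - 1`),
`∑_{s=0}^{n+1} h_s X^{n+1-s} = ∑_{i=0}^{n+1} f_{i-1}(K) (X-1)^{n+1-i}`. -/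
theorem h_vector_polynomial_identity {V : Type*} [DecidableEq V] [Fintype V]
    (n : ℕ) (hn : 0 < n) (K : Finset (Finset V)) (hK : IsComplex K)
    (hdim : ∀ σ ∈ K, σ.card ≤ n + 1)
    (h f : ℕ → ℕ)
    (hf0 : f 0 = h 0)
    (hface : ∀ i, 1 ≤ i → i ≤ n + 2 → f i = fnum K (i - 1))
    (htiling : ∀ j ≤ n, fnum K j = ∑ s ∈ Finset.range (n + 2), h s * tileFace n s j) :
    ∀ x : ℝ,
      ∑ s ∈ Finset.range (n + 2), (h s : ℝ) * x ^ (n + 1 - s)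
        = ∑ i ∈ Finset.range (n + 2), (f i : ℝ) * (x - 1) ^ (n + 1 - i) :=
  h_vector_polynomial_identity_general n K h f hf0 hface htiling
end

section
/- If two tilings \mathcal{T} and \mathcal{T}' of the same finite n-dimensional simplicial complex K satisfy h_0(\mathcal{T}) = h_0(\mathcal{T}'), then they have the same h-vector: h_s(\mathcal{T}) = h_s(\mathcal{T}') for all s in {0,...,n+1}. -/
/-!
The coefficient of `h_s` in `f_j` vanishes for `s > j + 1` and equals `1` for `s = j + 1`, so the
face-count relations form a unitriangular system in `h_1, …, h_{n+1}`: row `j` determines `h_{j+1}`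
from `f_j` and `h_0, …, h_j`, and forward substitution from `h_0` gives the whole `h`-vector.
-/

open Finset

theorem tileFace_eq_zero_of_succ_lt {n s j : ℕ} (hs : j + 1 < s) : tileFace n s j = 0 :=
  if_neg fun h => by omega

theorem tileFace_succ_self {n j : ℕ} (hj : j ≤ n) : tileFace n (j + 1) j = 1 := by
  rw [tileFace, if_pos ⟨le_rfl, hj⟩, show n + 1 - (j + 1) = n - j by omega, Nat.choose_self]

section Unitriangular

variable {R : Type*} [Semiring R] {m : ℕ} {a : ℕ → ℕ → R}

theorem sum_range_mul_eq_add_of_unitriangular (hzero : ∀ s j, j + 1 < s → a s j = 0)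
    (hone : ∀ j < m, a (j + 1) j = 1) (x : ℕ → R) {j : ℕ} (hj : j < m) :
    ∑ s ∈ range (m + 1), x s * a s j = ∑ s ∈ range (j + 1), x s * a s j + x (j + 1) := by
  have htrunc : ∑ s ∈ range (m + 1), x s * a s j = ∑ s ∈ range (j + 2), x s * a s j := by
    refine (sum_subset (range_subset_range.2 (by omega)) fun s _ hs => ?_).symm
    rw [hzero s j (by simp at hs; omega), mul_zero]
  rw [htrunc, sum_range_succ, hone j hj, mul_one]

theorem eq_of_unitriangular_sums_eq [IsLeftCancelAdd R]
    (hzero : ∀ s j, j + 1 < s → a s j = 0) (hone : ∀ j < m, a (j + 1) j = 1) {x y : ℕ → R}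
    (hsum : ∀ j < m, ∑ s ∈ range (m + 1), x s * a s j = ∑ s ∈ range (m + 1), y s * a s j)
    (h0 : x 0 = y 0) : ∀ s ≤ m, x s = y s := by
  intro s
  induction s using Nat.strong_induction_on with
  | _ s ih =>
    intro hs
    cases s with
    | zero => exact h0
    | succ j =>
      have hrow := hsum j (by omega)
      rw [sum_range_mul_eq_add_of_unitriangular hzero hone x (by omega),
        sum_range_mul_eq_add_of_unitriangular hzero hone y (by omega),
        sum_congr rfl fun t ht => by rw [ih t (by simp at ht; omega) (by simp at ht; omega)]]
        at hrow
      exact add_left_cancel hrow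

end Unitriangular

theorem tilings_same_h_vector_general {V : Type*} [DecidableEq V]
    (n : ℕ) (K : Finset (Finset V))
    (h h' : ℕ → ℕ)
    (htiling : ∀ j ≤ n, fnum K j = ∑ s ∈ Finset.range (n + 2), h s * tileFace n s j)
    (htiling' : ∀ j ≤ n, fnum K j = ∑ s ∈ Finset.range (n + 2), h' s * tileFace n s j)
    (h0 : h 0 = h' 0) :
    ∀ s ≤ n + 1, h s = h' s :=
  eq_of_unitriangular_sums_eq (fun _ _ hs => tileFace_eq_zero_of_succ_lt hs)
    (fun _ hj => tileFace_succ_self (Nat.lt_succ_iff.1 hj))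
    (fun j hj => (htiling j (by omega)).symm.trans (htiling' j (by omega))) h0

/-- If two tilings of the same finite `n`-dimensional simplicial complex `K`,
with `h`-vectors `h` and `h'` (so that the face-counting relations
`f_j(K) = ∑_s h_s f_j(T_s^n)` hold for both), satisfy `h 0 = h' 0`,
then they have the same `h`-vector. -/
theorem tilings_same_h_vector {V : Type*} [DecidableEq V] [Fintype V]
    (n : ℕ) (hn : 0 < n) (K : Finset (Finset V)) (hK : IsComplex K)
    (hdim : ∀ σ ∈ K, σ.card ≤ n + 1)
    (h h' : ℕ → ℕ)
    (htiling : ∀ j ≤ n, fnum K j = ∑ s ∈ Finset.range (n + 2), h s * tileFace n s j)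
    (htiling' : ∀ j ≤ n, fnum K j = ∑ s ∈ Finset.range (n + 2), h' s * tileFace n s j)
    (h0 : h 0 = h' 0) :
    ∀ s ≤ n + 1, h s = h' s :=
  tilings_same_h_vector_general n K h h' htiling htiling' h0
end

section
/- Let \mathcal{T} be a tiling of a finite n-dimensional simplicial complex K by the tiles T_0^n,...,T_{n+1}^n. Then the Euler characteristic of K equals h_0(\mathcal{T}) + (-1)^n h_{n+1}(\mathcal{T}). -/
/-!
Swapping the two sums, `χ(K) = ∑_s h_s χ(T_s^n)`, where `χ(T_s^n) = ∑_j (-1)^j f_j(T_s^n)`.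
After reflecting `j ↦ n - j`, `χ(T_s^n)` is `(-1)^n` times a partial alternating sum of the
binomial coefficients `C(n + 1 - s, k)`, `k ≤ n`. For `s ≤ n` this partial sum equals
`(-1)^n C(n - s, n)`, so `χ(T_s^n)` is `1` for `s = 0` and `0` otherwise; for `s = n + 1` the
sum is `1`, so `χ(T_{n+1}^n) = (-1)^n`.
-/

open Finset

lemma tileFace_of_le {n s j : ℕ} (hj : j ≤ n) (hs : s ≤ n + 1) :
    tileFace n s j = (n + 1 - s).choose (n - j) := by
  unfold tileFace
  split_ifs with hsj
  · rfl
  · exact (Nat.choose_eq_zero_of_lt (by omega)).symm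

lemma sum_range_neg_one_pow_mul_choose_sub (m n : ℕ) :
    ∑ j ∈ range (n + 1), (-1 : ℤ) ^ j * m.choose (n - j)
      = (-1) ^ n * ∑ k ∈ range (n + 1), (-1 : ℤ) ^ k * m.choose k := by
  rw [← sum_range_reflect, mul_sum]
  refine sum_congr rfl fun k hk => ?_
  have hkn : k ≤ n := Nat.lt_succ_iff.mp (mem_range.mp hk)
  have hsign : (-1 : ℤ) ^ n = (-1) ^ (n - k) * (-1) ^ k := by
    rw [← pow_add, Nat.sub_add_cancel hkn]
  rw [Nat.add_sub_cancel, Nat.sub_sub_self hkn, hsign, mul_assoc, ← mul_assoc ((-1 : ℤ) ^ k),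
    ← mul_pow]
  simp

def tileEulerChar (n s : ℕ) : ℤ :=
  ∑ j ∈ range (n + 1), (-1 : ℤ) ^ j * tileFace n s j

lemma tileEulerChar_eq (n s : ℕ) (hs : s ≤ n + 1) :
    tileEulerChar n s = (-1) ^ n * ∑ k ∈ range (n + 1), (-1 : ℤ) ^ k * (n + 1 - s).choose k := by
  rw [tileEulerChar, ← sum_range_neg_one_pow_mul_choose_sub]
  refine sum_congr rfl fun j hj => ?_
  rw [tileFace_of_le (Nat.lt_succ_iff.mp (mem_range.mp hj)) hs]

lemma tileEulerChar_of_le {n s : ℕ} (hs : s ≤ n) :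
    tileEulerChar n s = if s = 0 then 1 else 0 := by
  rw [tileEulerChar_eq n s (by omega), show n + 1 - s = n - s + 1 by omega,
    Int.alternating_sum_range_choose_eq_choose, ← mul_assoc, ← pow_add, ← two_mul, pow_mul]
  rcases Nat.eq_zero_or_pos s with rfl | hs0
  · simp
  · simp [Nat.choose_eq_zero_of_lt (show n - s < n by omega), hs0.ne']

lemma tileEulerChar_self_add_one (n : ℕ) : tileEulerChar n (n + 1) = (-1) ^ n := by
  rw [tileEulerChar_eq n (n + 1) le_rfl, Nat.sub_self, sum_range_succ']
  simp

theorem euler_characteristic_of_tiling_general {V : Type*} [DecidableEq V]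
    (n : ℕ) (K : Finset (Finset V))
    (h : ℕ → ℕ)
    (htiling : ∀ j ≤ n, fnum K j = ∑ s ∈ Finset.range (n + 2), h s * tileFace n s j) :
    ∑ j ∈ Finset.range (n + 1), (-1 : ℤ) ^ j * fnum K j
      = (h 0 : ℤ) + (-1 : ℤ) ^ n * h (n + 1) := by
  calc ∑ j ∈ range (n + 1), (-1 : ℤ) ^ j * fnum K j
      = ∑ j ∈ range (n + 1), ∑ s ∈ range (n + 2), (h s : ℤ) * ((-1) ^ j * tileFace n s j) := by
        refine sum_congr rfl fun j hj => ?_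
        rw [htiling j (Nat.lt_succ_iff.mp (mem_range.mp hj))]
        push_cast
        rw [mul_sum]
        exact sum_congr rfl fun s _ => by ring
    _ = ∑ s ∈ range (n + 2), (h s : ℤ) * tileEulerChar n s := by
        rw [sum_comm]
        simp only [tileEulerChar, mul_sum]
    _ = ∑ s ∈ range (n + 1), (h s : ℤ) * (if s = 0 then 1 else 0) + h (n + 1) * (-1) ^ n := by
        rw [sum_range_succ, tileEulerChar_self_add_one]
        congr 1
        exact sum_congr rfl fun s hs => by
          rw [tileEulerChar_of_le (Nat.lt_succ_iff.mp (mem_range.mp hs))]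
    _ = h 0 + (-1) ^ n * h (n + 1) := by
        simp [mul_comm]

/-- If the finite `n`-dimensional simplicial complex `K` carries a tiling with `h`-vector `h`
(so that `f_j(K) = ∑_s h_s f_j(T_s^n)` for all `j`), then the Euler characteristic
`χ(K) = ∑_j (-1)^j f_j(K)` equals `h 0 + (-1)^n h (n+1)`. -/
theorem euler_characteristic_of_tiling {V : Type*} [DecidableEq V] [Fintype V]
    (n : ℕ) (hn : 0 < n) (K : Finset (Finset V)) (hK : IsComplex K)
    (hdim : ∀ σ ∈ K, σ.card ≤ n + 1)
    (h : ℕ → ℕ)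
    (htiling : ∀ j ≤ n, fnum K j = ∑ s ∈ Finset.range (n + 2), h s * tileFace n s j) :
    ∑ j ∈ Finset.range (n + 1), (-1 : ℤ) ^ j * fnum K j
      = (h 0 : ℤ) + (-1 : ℤ) ^ n * h (n + 1) :=
  euler_characteristic_of_tiling_general n K h htiling
end

section
/- For n = 2, the matrix H_2 = [[1,4,1,0],[0,4,2,0],[0,2,4,0],[0,1,4,1]] is diagonalizable with eigenvalues 1, 1, 2, 6, commutes with the reversal involution \rho_2 of coordinates, and the vector (1,1,1,1) is an eigenvector for the eigenvalue 6. -/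
/-!
The rows of `H2Eigenvectors` are eigenvectors of `H₂` for `1, 1, 2, 6`: the first and last
columns of `H₂` are `e₀` and `e₃`, `H₂ (3,1,-1,-3) = 2 (3,1,-1,-3)`, and every row of `H₂` sums
to `6`. They form a basis since their determinant is `2`, so the transposed matrix diagonalizes
`H₂`. Commuting with the reversal `ρ₂ = Fin.revPerm.permMatrix` amounts to centrosymmetry,
`H₂ (3 - i) (3 - j) = H₂ i j`.
-/

open Matrix

namespace Matrix

variable {n R : Type*} [Fintype n] [DecidableEq n]

theorem mul_transpose_eq_transpose_mul_diagonal_iff [CommSemiring R] {A V : Matrix n n R}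
    {d : n → R} : A * Vᵀ = Vᵀ * diagonal d ↔ ∀ j, A *ᵥ V j = d j • V j := by
  simp only [← Matrix.ext_iff, funext_iff, mul_diagonal, transpose_apply, Pi.smul_apply,
    smul_eq_mul, mul_comm (d _)]
  rw [forall_comm]
  rfl

theorem eq_mul_diagonal_mul_inv_of_mul_eq [CommRing R] {A P : Matrix n n R} {d : n → R}
    (hP : IsUnit P) (h : A * P = P * diagonal d) : A = P * diagonal d * P⁻¹ := by
  rw [← h, mul_nonsing_inv_cancel_right _ _ ((isUnit_iff_isUnit_det P).mp hP)]

theorem mul_permMatrix_eq_permMatrix_mul_iff [NonAssocSemiring R] (σ : Equiv.Perm n)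
    (A : Matrix n n R) : A * σ.permMatrix R = σ.permMatrix R * A ↔ A.submatrix σ σ = A := by
  rw [PEquiv.mul_toMatrix_toPEquiv, PEquiv.toMatrix_toPEquiv_mul]
  constructor
  · intro h
    ext i j
    simpa using (congrFun₂ h i (σ j)).symm
  · intro h
    ext i j
    simpa using (congrFun₂ h i (σ.symm j)).symm

end Matrix

local notation "H₂" => (!![1,4,1,0; 0,4,2,0; 0,2,4,0; 0,1,4,1] : Matrix (Fin 4) (Fin 4) ℝ)

local notation "ρ₂" => (!![0,0,0,1; 0,0,1,0; 0,1,0,0; 1,0,0,0] : Matrix (Fin 4) (Fin 4) ℝ)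

def H2Eigenvectors : Matrix (Fin 4) (Fin 4) ℝ := !![1,0,0,0; 0,0,0,1; 3,1,-1,-3; 1,1,1,1]

theorem H2_mulVec_eigenvectors (j : Fin 4) :
    H₂ *ᵥ H2Eigenvectors j = (![1, 1, 2, 6] : Fin 4 → ℝ) j • H2Eigenvectors j := by
  fin_cases j <;> ext i <;> fin_cases i <;>
    simp [H2Eigenvectors, mulVec, dotProduct, Fin.sum_univ_four] <;> norm_num

theorem det_H2Eigenvectors : H2Eigenvectors.det = 2 := by
  simp [H2Eigenvectors, det_succ_row_zero, Fin.sum_univ_succ]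
  norm_num

theorem permMatrix_revPerm_fin_four : Fin.revPerm.permMatrix ℝ = ρ₂ := by
  ext i j; fin_cases i <;> fin_cases j <;> rfl

theorem H2_submatrix_rev : Matrix.submatrix H₂ Fin.rev Fin.rev = H₂ := by
  ext i j; fin_cases i <;> fin_cases j <;> rfl

/-- The subdivision matrix `H_2 = [[1,4,1,0],[0,4,2,0],[0,2,4,0],[0,1,4,1]]` is diagonalizable
with eigenvalues `1, 1, 2, 6`, commutes with the reversal involution
`ρ₂(h₀,h₁,h₂,h₃) = (h₃,h₂,h₁,h₀)`, and `(1,1,1,1)` is an eigenvector for the eigenvalue `6`. -/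
theorem H2_diagonalizable_and_symmetric :
    (∃ P : Matrix (Fin 4) (Fin 4) ℝ, IsUnit P ∧
      (!![1,4,1,0; 0,4,2,0; 0,2,4,0; 0,1,4,1] : Matrix (Fin 4) (Fin 4) ℝ)
          = P * Matrix.diagonal ![1, 1, 2, 6] * P⁻¹) ∧
    (!![1,4,1,0; 0,4,2,0; 0,2,4,0; 0,1,4,1] : Matrix (Fin 4) (Fin 4) ℝ)
        * !![0,0,0,1; 0,0,1,0; 0,1,0,0; 1,0,0,0]
      = (!![0,0,0,1; 0,0,1,0; 0,1,0,0; 1,0,0,0] : Matrix (Fin 4) (Fin 4) ℝ)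
        * !![1,4,1,0; 0,4,2,0; 0,2,4,0; 0,1,4,1] ∧
    (!![1,4,1,0; 0,4,2,0; 0,2,4,0; 0,1,4,1] : Matrix (Fin 4) (Fin 4) ℝ).mulVec ![1,1,1,1]
      = (6 : ℝ) • ![1,1,1,1] := by
  have hP : IsUnit H2Eigenvectorsᵀ := by
    rw [isUnit_transpose, isUnit_iff_isUnit_det, det_H2Eigenvectors]
    exact two_ne_zero.isUnit
  refine ⟨⟨H2Eigenvectorsᵀ, hP, eq_mul_diagonal_mul_inv_of_mul_eq hP ?_⟩, ?_, ?_⟩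
  · exact mul_transpose_eq_transpose_mul_diagonal_iff.mpr H2_mulVec_eigenvectors
  · rw [← permMatrix_revPerm_fin_four, mul_permMatrix_eq_permMatrix_mul_iff]
    exact H2_submatrix_rev
  · exact H2_mulVec_eigenvectors 3
end

section
/- For every n > 0, the barycentric subdivision Sd(\Delta_n) of the standard n-simplex contains a packing of pairwise disjoint closed simplices consisting of one n-simplex and, for every j in {0,...,n-1}, exactly 2^{n-1-j} simplices of dimension j. -/
/-!
Order the vertices `0 < 1 < ⋯ < n`. A nonempty face `A` that is not an initial segment
`{0,…,k}` has a first gap `i ∉ A` followed by a next element `m ∈ A`, so it is uniquely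
`A = [0,i) ∪ {m} ∪ S` with `i < m < S`. For fixed `(m, S)` the faces with `i < m` form a chain
of `m` faces, and the initial segments form a chain of `n + 1` faces; since the decomposition
is unique, these chains are pairwise disjoint. The chains of `j + 1` faces are those with
`m = j + 1`, one for each of the `2^(n-1-j)` sets `S ⊆ (j+1, n]`.
-/

open Finset

section LinearOrder

variable {α : Type*} [LinearOrder α]

theorem eq_and_eq_of_insert_eq {m m' : α} {S S' : Finset α} (hS : ∀ s ∈ S, m < s)
    (hS' : ∀ s ∈ S', m' < s) (h : insert m S = insert m' S') : m = m' ∧ S = S' := by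
  have le_of_eq : ∀ {m m' : α} {S S' : Finset α}, (∀ s ∈ S', m' < s) →
      insert m S = insert m' S' → m' ≤ m := by
    intro m m' S S' hS' h
    rcases mem_insert.1 (h ▸ mem_insert_self m S) with rfl | hm
    exacts [le_rfl, (hS' m hm).le]
  obtain rfl := le_antisymm (le_of_eq hS h.symm) (le_of_eq hS' h)
  refine ⟨rfl, ?_⟩
  rw [← erase_insert (fun hm => (hS m hm).false), h, erase_insert (fun hm => (hS' m hm).false)]

theorem image_nonempty_and_subset_total_of_monotone {ι : Type*} [LinearOrder ι]
    {f : ι → Finset α} (hf : Monotone f) (hne : ∀ i, (f i).Nonempty) (s : Finset ι) :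
    (∀ τ ∈ s.image f, τ.Nonempty) ∧ ∀ a ∈ s.image f, ∀ b ∈ s.image f, a ⊆ b ∨ b ⊆ a := by
  refine ⟨?_, fun a ha b hb => ?_⟩
  · simp only [mem_image, forall_exists_index, and_imp]
    rintro _ i - rfl
    exact hne i
  · obtain ⟨i, -, rfl⟩ := mem_image.1 ha
    obtain ⟨j, -, rfl⟩ := mem_image.1 hb
    exact hf.isChain_range.total ⟨i, rfl⟩ ⟨j, rfl⟩

theorem lt_of_mem_insert_of_lt {i m b : α} {S : Finset α} (hS : ∀ s ∈ S, m < s) (him : i < m)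
    (hb : b ∈ insert m S) : i < b := by
  rcases mem_insert.1 hb with rfl | hb
  exacts [him, him.trans (hS b hb)]

variable [LocallyFiniteOrderBot α]

theorem eq_and_eq_of_Iio_union_eq {i j : α} {B C : Finset α} (hB : ∀ b ∈ B, i < b)
    (hC : ∀ c ∈ C, j < c) (h : Iio i ∪ B = Iio j ∪ C) : i = j ∧ B = C := by
  have le_of_eq : ∀ {i j : α} {B C : Finset α}, (∀ b ∈ B, i < b) →
      Iio i ∪ B = Iio j ∪ C → j ≤ i := by
    intro i j B C hB h
    have hi : i ∉ Iio j ∪ C := h ▸ by simpa using fun hi => (hB i hi).false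
    simpa using (notMem_union.1 hi).1
  obtain rfl := le_antisymm (le_of_eq hC h.symm) (le_of_eq hB h)
  have disjoint_Iio : ∀ {B : Finset α}, (∀ b ∈ B, i < b) → Disjoint (Iio i) B :=
    fun hB => disjoint_left.2 fun x hx hxB => (mem_Iio.1 hx).asymm (hB x hxB)
  refine ⟨rfl, ?_⟩
  rw [← union_sdiff_cancel_left (disjoint_Iio hB), h, union_sdiff_cancel_left (disjoint_Iio hC)]

theorem Iic_ne_Iio_union {i j : α} {B : Finset α} (hB : ∀ b ∈ B, j < b) (hne : B.Nonempty) :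
    Iic i ≠ Iio j ∪ B := by
  intro h
  obtain ⟨b, hb⟩ := hne
  have hbi : b ≤ i := mem_Iic.1 (h ▸ mem_union_right _ hb)
  have hj : j ∈ Iio j ∪ B := h ▸ mem_Iic.2 ((hB b hb).le.trans hbi)
  simp only [mem_union, mem_Iio, lt_self_iff_false, false_or] at hj
  exact (hB j hj).false

def gapChain (m : α) (S : Finset α) : Finset (Finset α) :=
  (Iio m).image fun i => Iio i ∪ insert m S

theorem card_gapChain {m : α} {S : Finset α} (hS : ∀ s ∈ S, m < s) :
    #(gapChain m S) = #(Iio m) := by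
  refine card_image_of_injOn fun i hi j hj h => ?_
  exact (eq_and_eq_of_Iio_union_eq (fun _ => lt_of_mem_insert_of_lt hS (mem_Iio.1 hi))
    (fun _ => lt_of_mem_insert_of_lt hS (mem_Iio.1 hj)) h).1

theorem eq_and_eq_of_not_disjoint_gapChain {m m' : α} {S S' : Finset α} (hS : ∀ s ∈ S, m < s)
    (hS' : ∀ s ∈ S', m' < s) (h : ¬Disjoint (gapChain m S) (gapChain m' S')) :
    m = m' ∧ S = S' := by
  obtain ⟨A, hA, hA'⟩ := not_disjoint_iff.1 h
  obtain ⟨i, hi, rfl⟩ := mem_image.1 hA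
  obtain ⟨i', hi', hii'⟩ := mem_image.1 hA'
  exact eq_and_eq_of_insert_eq hS hS' (eq_and_eq_of_Iio_union_eq
    (fun _ => lt_of_mem_insert_of_lt hS (mem_Iio.1 hi))
    (fun _ => lt_of_mem_insert_of_lt hS' (mem_Iio.1 hi')) hii'.symm).2

theorem gapChain_nonempty_and_subset_total (m : α) (S : Finset α) :
    (∀ τ ∈ gapChain m S, τ.Nonempty) ∧
      ∀ a ∈ gapChain m S, ∀ b ∈ gapChain m S, a ⊆ b ∨ b ⊆ a :=
  image_nonempty_and_subset_total_of_monotone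
    (fun _ _ hij => union_subset_union_left (Iio_subset_Iio hij))
    (fun _ => ⟨m, mem_union_right _ (mem_insert_self m S)⟩) _

variable [Fintype α]

variable (α) in
def initialChain : Finset (Finset α) :=
  univ.image Iic

theorem card_initialChain : #(initialChain α) = Fintype.card α :=
  card_image_of_injective _ fun _ _ h =>
    le_antisymm (Iic_subset_Iic.1 h.le) (Iic_subset_Iic.1 h.ge)

theorem initialChain_nonempty_and_subset_total :
    (∀ τ ∈ initialChain α, τ.Nonempty) ∧
      ∀ a ∈ initialChain α, ∀ b ∈ initialChain α, a ⊆ b ∨ b ⊆ a :=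
  image_nonempty_and_subset_total_of_monotone (fun _ _ => Iic_subset_Iic.2)
    (fun _ => nonempty_Iic) _

theorem disjoint_initialChain_gapChain {m : α} {S : Finset α} (hS : ∀ s ∈ S, m < s) :
    Disjoint (initialChain α) (gapChain m S) := by
  refine disjoint_left.2 fun A hA hA' => ?_
  obtain ⟨i, -, rfl⟩ := mem_image.1 hA
  obtain ⟨j, hj, h⟩ := mem_image.1 hA'
  exact Iic_ne_Iio_union (fun _ => lt_of_mem_insert_of_lt hS (mem_Iio.1 hj))
    (insert_nonempty m S) h.symm

end LinearOrder

def packing (n : ℕ) : Finset (Finset (Finset (Fin (n + 1)))) :=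
  insert (initialChain (Fin (n + 1)))
    ((univ.filter fun p : Fin (n + 1) × Finset (Fin (n + 1)) => 0 < p.1 ∧ ∀ s ∈ p.2, p.1 < s).image
      fun p => gapChain p.1 p.2)

section Packing

variable {n : ℕ}

theorem mem_packing {c : Finset (Finset (Fin (n + 1)))} :
    c ∈ packing n ↔ c = initialChain (Fin (n + 1)) ∨
      ∃ m S, 0 < m ∧ (∀ s ∈ S, m < s) ∧ gapChain m S = c := by
  simp [packing, and_assoc]

theorem nonempty_and_subset_total_of_mem_packing {c : Finset (Finset (Fin (n + 1)))}
    (hc : c ∈ packing n) :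
    (∀ τ ∈ c, τ.Nonempty) ∧ ∀ a ∈ c, ∀ b ∈ c, a ⊆ b ∨ b ⊆ a := by
  obtain rfl | ⟨m, S, -, -, rfl⟩ := mem_packing.1 hc
  exacts [initialChain_nonempty_and_subset_total, gapChain_nonempty_and_subset_total m S]

theorem disjoint_of_mem_packing {c c' : Finset (Finset (Fin (n + 1)))} (hc : c ∈ packing n)
    (hc' : c' ∈ packing n) (hne : c ≠ c') : Disjoint c c' := by
  obtain rfl | ⟨m, S, -, hS, rfl⟩ := mem_packing.1 hc <;>
    obtain rfl | ⟨m', S', -, hS', rfl⟩ := mem_packing.1 hc'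
  · exact absurd rfl hne
  · exact disjoint_initialChain_gapChain hS'
  · exact (disjoint_initialChain_gapChain hS).symm
  · by_contra h
    obtain ⟨rfl, rfl⟩ := eq_and_eq_of_not_disjoint_gapChain hS hS' h
    exact hne rfl

theorem card_gapChain_fin {m : Fin (n + 1)} {S : Finset (Fin (n + 1))} (hS : ∀ s ∈ S, m < s) :
    #(gapChain m S) = m := by
  rw [card_gapChain hS, Fin.card_Iio]

theorem filter_card_packing_eq_top :
    (packing n).filter (fun c => #c = n + 1) = {initialChain (Fin (n + 1))} := by
  ext c
  rw [mem_filter, mem_singleton]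
  refine ⟨fun ⟨hc, hcard⟩ => ?_, ?_⟩
  · obtain rfl | ⟨m, S, -, hS, rfl⟩ := mem_packing.1 hc
    · rfl
    · rw [card_gapChain_fin hS] at hcard
      exact absurd hcard m.is_lt.ne
  · rintro rfl
    exact ⟨mem_packing.2 (Or.inl rfl), by rw [card_initialChain, Fintype.card_fin]⟩

theorem filter_card_packing_eq {m : Fin (n + 1)} (hm : 0 < m) :
    (packing n).filter (fun c => #c = m) = (Ioi m).powerset.image (gapChain m) := by
  ext c
  simp only [mem_filter, mem_image, mem_powerset, subset_iff, mem_Ioi]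
  refine ⟨fun ⟨hc, hcard⟩ => ?_, ?_⟩
  · obtain rfl | ⟨m', S, -, hS, rfl⟩ := mem_packing.1 hc
    · rw [card_initialChain, Fintype.card_fin] at hcard
      exact absurd hcard m.is_lt.ne.symm
    · obtain rfl : m' = m := Fin.ext ((card_gapChain_fin hS).symm.trans hcard)
      exact ⟨S, hS, rfl⟩
  · rintro ⟨S, hS, rfl⟩
    exact ⟨mem_packing.2 (Or.inr ⟨m, S, hm, hS, rfl⟩), card_gapChain_fin hS⟩

theorem card_filter_card_packing {m : Fin (n + 1)} (hm : 0 < m) :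
    #((packing n).filter (fun c => #c = m)) = 2 ^ (n - m) := by
  rw [filter_card_packing_eq hm, card_image_of_injOn, card_powerset, Fin.card_Ioi,
    Nat.add_sub_cancel]
  intro S hS S' hS' h
  simp only [coe_powerset, Set.mem_preimage, Set.mem_powerset_iff, coe_subset] at hS hS'
  have hne : (gapChain m S).Nonempty := Nonempty.image ⟨0, mem_Iio.2 hm⟩ _
  refine (eq_and_eq_of_not_disjoint_gapChain (fun s hs => mem_Ioi.1 (hS hs))
    (fun s hs => mem_Ioi.1 (hS' hs)) ?_).2
  rw [← h, disjoint_self_iff_empty]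
  exact hne.ne_empty

end Packing

theorem packing_in_barycentric_subdivision_general (n : ℕ) :
    ∃ P : Finset (Finset (Finset (Fin (n + 1)))),
      (∀ c ∈ P, (∀ τ ∈ c, Finset.Nonempty τ) ∧ ∀ a ∈ c, ∀ b ∈ c, a ⊆ b ∨ b ⊆ a) ∧
      (∀ c ∈ P, ∀ c' ∈ P, c ≠ c' → Disjoint c c') ∧
      (P.filter fun c => c.card = n + 1).card = 1 ∧
      ∀ j < n, (P.filter fun c => c.card = j + 1).card = 2 ^ (n - 1 - j) := by
  refine ⟨packing n, fun c => nonempty_and_subset_total_of_mem_packing,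
    fun c hc c' hc' => disjoint_of_mem_packing hc hc', ?_, fun j hj => ?_⟩
  · rw [filter_card_packing_eq_top, card_singleton]
  · have := card_filter_card_packing (m := (⟨j + 1, by omega⟩ : Fin (n + 1)))
      (Fin.mk_lt_mk.2 j.succ_pos)
    rwa [Nat.sub_sub, Nat.add_comm 1]

/-- The first barycentric subdivision `Sd(Δ_n)` has as vertices the nonempty faces of `Δ_n`
(nonempty subsets of `Fin (n+1)`) and as `q`-simplices the chains of `q+1` faces ordered by
strict inclusion; two closed simplices of a simplicial complex are disjoint subsets of
`|Δ_n|` exactly when they share no vertex.  `Sd(Δ_n)` contains a packing of pairwise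
disjoint closed simplices consisting of one `n`-simplex and, for each `j ∈ {0,…,n-1}`,
exactly `2^{n-1-j}` simplices of dimension `j`. -/
theorem packing_in_barycentric_subdivision (n : ℕ) (hn : 0 < n) :
    ∃ P : Finset (Finset (Finset (Fin (n + 1)))),
      (∀ c ∈ P, (∀ τ ∈ c, Finset.Nonempty τ) ∧ ∀ a ∈ c, ∀ b ∈ c, a ⊆ b ∨ b ⊆ a) ∧
      (∀ c ∈ P, ∀ c' ∈ P, c ≠ c' → Disjoint c c') ∧
      (P.filter fun c => c.card = n + 1).card = 1 ∧
      ∀ j < n, (P.filter fun c => c.card = j + 1).card = 2 ^ (n - 1 - j) :=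
  packing_in_barycentric_subdivision_general n
end
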